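/- Let a, a' ∈ ℝ^m and b, b' ∈ ℝ^k all be nonzero vectors, and let (a, b), (a', b') ∈ ℝ^{m+k} denote the stacked (concatenated) vectors. Then min{ sin∠(a', a), sin∠(b', b) } ≤ sin∠( (a', b'), (a, b) ), and √( sin²∠(a', a) + sin²∠(b', b) ) ≤ ϱ · sin∠( (a', b'), (a, b) ), where ϱ = √( 1 + max{ ‖a‖²/‖b‖², ‖b‖²/‖a‖² } ). -/

import Mathlib

/-!
Squared distances add over the two blocks: for every `μ`,
`‖(a, b) - μ (a', b')‖² = ‖a - μ a'‖² + ‖b - μ b'‖² ≥ sin²∠(a', a) ‖a‖² + sin²∠(b', b) ‖b‖²`.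
Hence `sin∠((a', b'), (a, b))` dominates the root of the mean of `sin²∠(a', a)` and
`sin²∠(b', b)` weighted by `‖a‖²` and `‖b‖²`. Both inequalities are elementary bounds on
this weighted mean, using `1 + max (p / q) (q / p) = (p + q) / min p q`.
-/

/-- `sinAngle w' w` is the sine of the angle between `w` and the line spanned
by `w'`, i.e. `min_{μ ∈ ℝ} ‖w − μ w'‖ / ‖w‖`. -/
noncomputable def sinAngle {ι : Type*} [Fintype ι] (w' w : EuclideanSpace ℝ ι) : ℝ :=
  ⨅ μ : ℝ, ‖w - μ • w'‖ / ‖w‖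

/-- The stacked (concatenated) vector of `a` and `b`. -/
def stack {m k : ℕ} (a : EuclideanSpace ℝ (Fin m)) (b : EuclideanSpace ℝ (Fin k)) :
    EuclideanSpace ℝ (Fin m ⊕ Fin k) :=
  WithLp.toLp 2 (Sum.elim a b)

open Real

lemma norm_stack_sq {m k : ℕ} (x : EuclideanSpace ℝ (Fin m)) (y : EuclideanSpace ℝ (Fin k)) :
    ‖stack x y‖ ^ 2 = ‖x‖ ^ 2 + ‖y‖ ^ 2 := by
  simp only [EuclideanSpace.norm_eq, sq_sqrt (Finset.sum_nonneg fun _ _ => sq_nonneg _)]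
  exact Fintype.sum_sum_type _

lemma stack_sub_smul {m k : ℕ} (a a' : EuclideanSpace ℝ (Fin m))
    (b b' : EuclideanSpace ℝ (Fin k)) (μ : ℝ) :
    stack a b - μ • stack a' b' = stack (a - μ • a') (b - μ • b') := by
  ext (i | i) <;> rfl

section sinAngle

variable {ι : Type*} [Fintype ι]

lemma sinAngle_nonneg (w' w : EuclideanSpace ℝ ι) : 0 ≤ sinAngle w' w :=
  Real.iInf_nonneg fun _ => div_nonneg (norm_nonneg _) (norm_nonneg _)

lemma sinAngle_mul_norm_le (w' w : EuclideanSpace ℝ ι) (μ : ℝ) :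
    sinAngle w' w * ‖w‖ ≤ ‖w - μ • w'‖ := by
  rcases eq_or_ne w 0 with rfl | hw
  · simp
  have hbdd : BddBelow (Set.range fun ν : ℝ => ‖w - ν • w'‖ / ‖w‖) :=
    ⟨0, by rintro _ ⟨ν, rfl⟩; positivity⟩
  exact (le_div_iff₀ (norm_pos_iff.mpr hw)).mp (ciInf_le hbdd μ)

lemma le_sinAngle_of_forall {w' w : EuclideanSpace ℝ ι} (hw : w ≠ 0) {c : ℝ}
    (h : ∀ μ : ℝ, c * ‖w‖ ≤ ‖w - μ • w'‖) : c ≤ sinAngle w' w :=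
  le_ciInf fun μ => (le_div_iff₀ (norm_pos_iff.mpr hw)).mpr (h μ)

end sinAngle

lemma sqrt_weighted_mean_sinAngle_le_sinAngle_stack {m k : ℕ}
    (a a' : EuclideanSpace ℝ (Fin m)) (b b' : EuclideanSpace ℝ (Fin k)) :
    √((sinAngle a' a ^ 2 * ‖a‖ ^ 2 + sinAngle b' b ^ 2 * ‖b‖ ^ 2) / (‖a‖ ^ 2 + ‖b‖ ^ 2))
      ≤ sinAngle (stack a' b') (stack a b) := by
  rcases eq_or_ne (stack a b) 0 with h0 | h0
  · have : ‖a‖ ^ 2 + ‖b‖ ^ 2 = 0 := by rw [← norm_stack_sq, h0, norm_zero, sq, zero_mul]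
    rw [this, div_zero, sqrt_zero]
    exact sinAngle_nonneg _ _
  refine le_sinAngle_of_forall h0 fun μ => ?_
  have hpos : 0 < ‖a‖ ^ 2 + ‖b‖ ^ 2 := by rw [← norm_stack_sq]; positivity
  have hA := sinAngle_mul_norm_le a' a μ
  have hB := sinAngle_mul_norm_le b' b μ
  have hA0 := mul_nonneg (sinAngle_nonneg a' a) (norm_nonneg a)
  have hB0 := mul_nonneg (sinAngle_nonneg b' b) (norm_nonneg b)
  calc _ = √(sinAngle a' a ^ 2 * ‖a‖ ^ 2 + sinAngle b' b ^ 2 * ‖b‖ ^ 2) := by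
        rw [← sqrt_sq (norm_nonneg (stack a b)), ← sqrt_mul' _ (sq_nonneg _), norm_stack_sq,
          div_mul_cancel₀ _ hpos.ne']
    _ ≤ √(‖a - μ • a'‖ ^ 2 + ‖b - μ • b'‖ ^ 2) := sqrt_le_sqrt (by nlinarith)
    _ = _ := by rw [stack_sub_smul, ← norm_stack_sq, sqrt_sq (norm_nonneg _)]

lemma min_le_sqrt_weighted_mean {x y p q : ℝ} (hx : 0 ≤ x) (hy : 0 ≤ y) (hp : 0 ≤ p)
    (hq : 0 ≤ q) (hpq : 0 < p + q) :
    min x y ≤ √((x ^ 2 * p + y ^ 2 * q) / (p + q)) := by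
  have hmin := le_min hx hy
  refine le_sqrt_of_sq_le ((le_div_iff₀ hpq).mpr ?_)
  have hx' := pow_le_pow_left₀ hmin (min_le_left x y) 2
  have hy' := pow_le_pow_left₀ hmin (min_le_right x y) 2
  nlinarith [mul_le_mul_of_nonneg_right hx' hp, mul_le_mul_of_nonneg_right hy' hq]

lemma one_add_max_div_eq_add_div_min {p q : ℝ} (hp : 0 < p) (hq : 0 < q) :
    1 + max (p / q) (q / p) = (p + q) / min p q := by
  rcases le_total p q with h | h
  · rw [min_eq_left h, max_eq_right, add_div, div_self hp.ne']
    · exact (div_le_one_of_le₀ h hq.le).trans ((one_le_div hp).mpr h)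
  · rw [min_eq_right h, max_eq_left, add_div, div_self hq.ne', add_comm]
    · exact (div_le_one_of_le₀ h hp.le).trans ((one_le_div hq).mpr h)

lemma sqrt_sq_add_sq_le_mul_sqrt_weighted_mean (x y : ℝ) {p q : ℝ} (hp : 0 < p) (hq : 0 < q) :
    √(x ^ 2 + y ^ 2)
      ≤ √(1 + max (p / q) (q / p)) * √((x ^ 2 * p + y ^ 2 * q) / (p + q)) := by
  have hmin : 0 < min p q := lt_min hp hq
  rw [one_add_max_div_eq_add_div_min hp hq, ← sqrt_mul (by positivity), div_mul_div_comm,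
    mul_comm (p + q), mul_div_mul_right _ _ (by positivity)]
  refine sqrt_le_sqrt ((le_div_iff₀ hmin).mpr ?_)
  nlinarith [mul_le_mul_of_nonneg_left (min_le_left p q) (sq_nonneg x),
    mul_le_mul_of_nonneg_left (min_le_right p q) (sq_nonneg y)]

theorem stmt_16_general {m k : ℕ}
    (a a' : EuclideanSpace ℝ (Fin m)) (b b' : EuclideanSpace ℝ (Fin k))
    (ha : a ≠ 0) (hb : b ≠ 0) :
    min (sinAngle a' a) (sinAngle b' b) ≤ sinAngle (stack a' b') (stack a b) ∧
    Real.sqrt (sinAngle a' a ^ 2 + sinAngle b' b ^ 2)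
      ≤ Real.sqrt (1 + max (‖a‖ ^ 2 / ‖b‖ ^ 2) (‖b‖ ^ 2 / ‖a‖ ^ 2)) *
        sinAngle (stack a' b') (stack a b) := by
  have hA : 0 < ‖a‖ ^ 2 := by positivity
  have hB : 0 < ‖b‖ ^ 2 := by positivity
  have hmean := sqrt_weighted_mean_sinAngle_le_sinAngle_stack a a' b b'
  constructor
  · exact (min_le_sqrt_weighted_mean (sinAngle_nonneg a' a) (sinAngle_nonneg b' b) hA.le hB.le
      (add_pos hA hB)).trans hmean
  · exact (sqrt_sq_add_sq_le_mul_sqrt_weighted_mean _ _ hA hB).trans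
      (mul_le_mul_of_nonneg_left hmean (sqrt_nonneg _))

/-- min{sin∠(a', a), sin∠(b', b)} ≤ sin∠((a', b'), (a, b)), and
√(sin²∠(a', a) + sin²∠(b', b)) ≤ ϱ sin∠((a', b'), (a, b)) with
ϱ = √(1 + max{‖a‖²/‖b‖², ‖b‖²/‖a‖²}). -/
theorem stmt_16 {m k : ℕ}
    (a a' : EuclideanSpace ℝ (Fin m)) (b b' : EuclideanSpace ℝ (Fin k))
    (ha : a ≠ 0) (ha' : a' ≠ 0) (hb : b ≠ 0) (hb' : b' ≠ 0) :
    min (sinAngle a' a) (sinAngle b' b) ≤ sinAngle (stack a' b') (stack a b) ∧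
    Real.sqrt (sinAngle a' a ^ 2 + sinAngle b' b ^ 2)
      ≤ Real.sqrt (1 + max (‖a‖ ^ 2 / ‖b‖ ^ 2) (‖b‖ ^ 2 / ‖a‖ ^ 2)) *
        sinAngle (stack a' b') (stack a b) :=
  stmt_16_general a a' b b' ha hb
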